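/- arXiv:2402.17756 — 2 statements merged into one kernel-verified Lean document; each statement's English description precedes it below -/
import Mathlib

section
/- Let D be a joint distribution of (x,y) ∈ ℝ^d × ℝ and let y* = u*(w*·x) for a fixed (a,b)-unbounded u* and w* ∈ ℝ^d. Fix w^t ∈ ℝ^d and let u^t minimize E[(u(w^t·x) - y)²] over the class U_{(a,b)}, and let u^{*t} minimize E[(u(w^t·x) - y*)²] over U_{(a,b)}. Then E_x[(u^t(w^t·x) - u^{*t}(w^t·x))²] ≤ OPT, where OPT = E[(y - y*)²]. -/
open MeasureTheory
open scoped RealInnerProductSpace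

/-- An `(a,b)`-unbounded activation. -/
def IsUnboundedActivation (a b : ℝ) (u : ℝ → ℝ) : Prop :=
  u 0 = 0 ∧ Monotone u ∧ LipschitzWith (Real.toNNReal b) u ∧
    ∀ z z' : ℝ, 0 ≤ z' → z' ≤ z → a * (z - z') ≤ u z - u z'

/-! Composing with `p ↦ ⟪wt, p.1⟫` maps the convex class `U_{(a,b)}` onto a convex set `K` of
functions, and `uₜ`, `uₜ*` are the `L²(D)`-projections of `y` and `y*` onto `K`. Projection onto a
convex set of a Hilbert space is `1`-Lipschitz: the variational inequalities
`⟪y - f, g - f⟫ ≤ 0` and `⟪y* - g, f - g⟫ ≤ 0` add up to `‖f - g‖² ≤ ⟪y - y*, f - g⟫`, and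
Cauchy–Schwarz finishes. -/

theorem convex_setOf_lipschitzWith {X : Type*} [PseudoMetricSpace X] (K : NNReal) :
    Convex ℝ {u : X → ℝ | LipschitzWith K u} := by
  intro u hu v hv s t hs ht hst
  refine LipschitzWith.of_dist_le_mul fun x x' => ?_
  have hux := hu.dist_le_mul x x'
  have hvx := hv.dist_le_mul x x'
  simp only [Real.dist_eq, Pi.add_apply, Pi.smul_apply, smul_eq_mul] at hux hvx ⊢
  calc |s * u x + t * v x - (s * u x' + t * v x')|
      = |s * (u x - u x') + t * (v x - v x')| := by ring_nf
    _ ≤ s * |u x - u x'| + t * |v x - v x'| := by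
      refine (abs_add_le _ _).trans ?_
      rw [abs_mul, abs_mul, abs_of_nonneg hs, abs_of_nonneg ht]
    _ ≤ s * (K * dist x x') + t * (K * dist x x') := by gcongr
    _ = K * dist x x' := by rw [← add_mul, hst, one_mul]

theorem convex_setOf_isUnboundedActivation (a b : ℝ) :
    Convex ℝ {u | IsUnboundedActivation a b u} := by
  rintro u ⟨hu0, hu_mono, hu_lip, hu_grow⟩ v ⟨hv0, hv_mono, hv_lip, hv_grow⟩ s t hs ht hst
  refine ⟨by simp [hu0, hv0], ?_, convex_setOf_lipschitzWith _ hu_lip hv_lip hs ht hst, ?_⟩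
  · exact ((hu_mono.const_mul hs).add (hv_mono.const_mul ht) :)
  · intro z z' hz' hzz'
    have hu := hu_grow z z' hz' hzz'
    have hv := hv_grow z z' hz' hzz'
    simp only [Pi.add_apply, Pi.smul_apply, smul_eq_mul]
    calc a * (z - z') = s * (a * (z - z')) + t * (a * (z - z')) := by
          rw [← add_mul, hst, one_mul]
      _ ≤ s * (u z - u z') + t * (v z - v z') := by gcongr
      _ = _ := by ring

section InnerProductSpace

variable {F : Type*} [NormedAddCommGroup F] [InnerProductSpace ℝ F]

theorem real_inner_sub_sub_nonpos_of_forall_mem_segment {f g y : F}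
    (hf : ∀ w ∈ segment ℝ f g, ‖f - y‖ ≤ ‖w - y‖) : ⟪y - f, g - f⟫ ≤ 0 := by
  have hf_mem : f ∈ segment ℝ f g := left_mem_segment ℝ f g
  have : Nonempty (segment ℝ f g) := ⟨⟨f, hf_mem⟩⟩
  have hbdd : BddBelow (Set.range fun w : segment ℝ f g => ‖y - w‖) :=
    ⟨0, Set.forall_mem_range.2 fun _ => norm_nonneg _⟩
  have hmin : ‖y - f‖ = ⨅ w : segment ℝ f g, ‖y - w‖ :=
    le_antisymm (le_ciInf fun w => by simpa only [norm_sub_rev y] using hf w w.2)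
      (ciInf_le hbdd ⟨f, hf_mem⟩)
  exact (norm_eq_iInf_iff_real_inner_le_zero (convex_segment f g) hf_mem).1 hmin g
    (right_mem_segment ℝ f g)

theorem norm_sub_le_of_forall_mem_segment {f g y z : F}
    (hf : ∀ w ∈ segment ℝ f g, ‖f - y‖ ≤ ‖w - y‖)
    (hg : ∀ w ∈ segment ℝ g f, ‖g - z‖ ≤ ‖w - z‖) : ‖f - g‖ ≤ ‖y - z‖ := by
  have hf_inner := real_inner_sub_sub_nonpos_of_forall_mem_segment hf
  have hg_inner := real_inner_sub_sub_nonpos_of_forall_mem_segment hg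
  have hsum : ⟪y - f, g - f⟫ + ⟪z - g, f - g⟫ = ‖f - g‖ ^ 2 - ⟪y - z, f - g⟫ := by
    rw [← neg_sub f g, inner_neg_right, ← real_inner_self_eq_norm_sq, ← inner_sub_left,
      neg_add_eq_sub, ← inner_sub_left]
    congr 1
    abel
  have hcs : ‖f - g‖ ^ 2 ≤ ‖y - z‖ * ‖f - g‖ :=
    (by linarith : ‖f - g‖ ^ 2 ≤ ⟪y - z, f - g⟫).trans (real_inner_le_norm _ _)
  nlinarith [norm_nonneg (f - g), norm_nonneg (y - z)]

end InnerProductSpace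

section L2

variable {α : Type*} [MeasurableSpace α] {μ : Measure α}

theorem MeasureTheory.MemLp.norm_toLp_sub_toLp_sq {f g : α → ℝ} (hf : MemLp f 2 μ)
    (hg : MemLp g 2 μ) : ‖hf.toLp f - hg.toLp g‖ ^ 2 = ∫ x, (f x - g x) ^ 2 ∂μ := by
  rw [← MemLp.toLp_sub, ← real_inner_self_eq_norm_sq, L2.inner_def]
  refine integral_congr_ae ((hf.sub hg).coeFn_toLp.mono fun x hx => ?_)
  simp [hx, sq]

theorem MeasureTheory.MemLp.forall_mem_segment_norm_toLp_sub_le {K : Set (α → ℝ)}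
    (hK : Convex ℝ K) {f g y : α → ℝ} (hfK : f ∈ K) (hgK : g ∈ K) (hf : MemLp f 2 μ)
    (hg : MemLp g 2 μ) (hy : MemLp y 2 μ)
    (hmin : ∀ w ∈ K, ∫ x, (f x - y x) ^ 2 ∂μ ≤ ∫ x, (w x - y x) ^ 2 ∂μ) :
    ∀ W ∈ segment ℝ (hf.toLp f) (hg.toLp g), ‖hf.toLp f - hy.toLp y‖ ≤ ‖W - hy.toLp y‖ := by
  rintro _ ⟨s, t, hs, ht, hst, rfl⟩
  have hw : MemLp (s • f + t • g) 2 μ := (hf.const_smul s).add (hg.const_smul t)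
  have hW : s • hf.toLp f + t • hg.toLp g = hw.toLp _ := by
    rw [MemLp.toLp_add (hf.const_smul s) (hg.const_smul t), MemLp.toLp_const_smul,
      MemLp.toLp_const_smul]
  rw [hW, ← sq_le_sq₀ (norm_nonneg _) (norm_nonneg _), hf.norm_toLp_sub_toLp_sq,
    hw.norm_toLp_sub_toLp_sq]
  exact hmin _ (hK hfK hgK hs ht hst)

theorem integral_sq_sub_le_of_convex_of_forall_le {K : Set (α → ℝ)} (hK : Convex ℝ K)
    {f g y z : α → ℝ} (hfK : f ∈ K) (hgK : g ∈ K) (hf : MemLp f 2 μ) (hg : MemLp g 2 μ)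
    (hy : MemLp y 2 μ) (hz : MemLp z 2 μ)
    (hfmin : ∀ w ∈ K, ∫ x, (f x - y x) ^ 2 ∂μ ≤ ∫ x, (w x - y x) ^ 2 ∂μ)
    (hgmin : ∀ w ∈ K, ∫ x, (g x - z x) ^ 2 ∂μ ≤ ∫ x, (w x - z x) ^ 2 ∂μ) :
    ∫ x, (f x - g x) ^ 2 ∂μ ≤ ∫ x, (y x - z x) ^ 2 ∂μ := by
  rw [← hf.norm_toLp_sub_toLp_sq hg, ← hy.norm_toLp_sub_toLp_sq hz]
  gcongr
  exact norm_sub_le_of_forall_mem_segment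
    (hf.forall_mem_segment_norm_toLp_sub_le hK hfK hgK hg hy hfmin)
    (hg.forall_mem_segment_norm_toLp_sub_le hK hgK hfK hf hz hgmin)

end L2

theorem population_optimal_activations_close_general
    {d : ℕ} (a b : ℝ)
    (D : Measure (EuclideanSpace ℝ (Fin d) × ℝ))
    (hy : MemLp (fun p : EuclideanSpace ℝ (Fin d) × ℝ => p.2) 2 D)
    (ustar : ℝ → ℝ)
    (wstar wt : EuclideanSpace ℝ (Fin d))
    (hystar : MemLp (fun p : EuclideanSpace ℝ (Fin d) × ℝ => ustar ⟪wstar, p.1⟫) 2 D)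
    (ut : ℝ → ℝ) (hut : IsUnboundedActivation a b ut)
    (hutL2 : MemLp (fun p : EuclideanSpace ℝ (Fin d) × ℝ => ut ⟪wt, p.1⟫) 2 D)
    (hutmin : ∀ u : ℝ → ℝ, IsUnboundedActivation a b u →
      ∫ p, (ut ⟪wt, p.1⟫ - p.2) ^ 2 ∂D ≤ ∫ p, (u ⟪wt, p.1⟫ - p.2) ^ 2 ∂D)
    (ust : ℝ → ℝ) (hust : IsUnboundedActivation a b ust)
    (hustL2 : MemLp (fun p : EuclideanSpace ℝ (Fin d) × ℝ => ust ⟪wt, p.1⟫) 2 D)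
    (hustmin : ∀ u : ℝ → ℝ, IsUnboundedActivation a b u →
      ∫ p, (ust ⟪wt, p.1⟫ - ustar ⟪wstar, p.1⟫) ^ 2 ∂D ≤
        ∫ p, (u ⟪wt, p.1⟫ - ustar ⟪wstar, p.1⟫) ^ 2 ∂D) :
    ∫ p, (ut ⟪wt, p.1⟫ - ust ⟪wt, p.1⟫) ^ 2 ∂D ≤
      ∫ p, (p.2 - ustar ⟪wstar, p.1⟫) ^ 2 ∂D := by
  let compWt := LinearMap.funLeft ℝ ℝ fun p : EuclideanSpace ℝ (Fin d) × ℝ => ⟪wt, p.1⟫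
  refine integral_sq_sub_le_of_convex_of_forall_le
    ((convex_setOf_isUnboundedActivation a b).linear_image compWt)
    ⟨ut, hut, rfl⟩ ⟨ust, hust, rfl⟩ hutL2 hustL2 hy hystar ?_ ?_
  · rintro _ ⟨u, hu, rfl⟩
    exact hutmin u hu
  · rintro _ ⟨u, hu, rfl⟩
    exact hustmin u hu

/-- **Closeness of population-optimal activations.** If `uₜ` minimizes
`E[(u (wₜ·x) - y)²]` and `uₜ*` minimizes `E[(u (wₜ·x) - y*)²]` over `U_{(a,b)}`,
where `y* = u*(w*·x)`, then `E[(uₜ(wₜ·x) - uₜ*(wₜ·x))²] ≤ OPT = E[(y - y*)²]`. -/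
theorem population_optimal_activations_close
    {d : ℕ} (a b : ℝ) (ha : 0 < a) (hab : a ≤ b)
    (D : Measure (EuclideanSpace ℝ (Fin d) × ℝ)) [IsProbabilityMeasure D]
    (hy : MemLp (fun p : EuclideanSpace ℝ (Fin d) × ℝ => p.2) 2 D)
    (ustar : ℝ → ℝ) (hustar : IsUnboundedActivation a b ustar)
    (wstar wt : EuclideanSpace ℝ (Fin d))
    (hystar : MemLp (fun p : EuclideanSpace ℝ (Fin d) × ℝ => ustar ⟪wstar, p.1⟫) 2 D)
    (ut : ℝ → ℝ) (hut : IsUnboundedActivation a b ut)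
    (hutL2 : MemLp (fun p : EuclideanSpace ℝ (Fin d) × ℝ => ut ⟪wt, p.1⟫) 2 D)
    (hutmin : ∀ u : ℝ → ℝ, IsUnboundedActivation a b u →
      ∫ p, (ut ⟪wt, p.1⟫ - p.2) ^ 2 ∂D ≤ ∫ p, (u ⟪wt, p.1⟫ - p.2) ^ 2 ∂D)
    (ust : ℝ → ℝ) (hust : IsUnboundedActivation a b ust)
    (hustL2 : MemLp (fun p : EuclideanSpace ℝ (Fin d) × ℝ => ust ⟪wt, p.1⟫) 2 D)
    (hustmin : ∀ u : ℝ → ℝ, IsUnboundedActivation a b u →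
      ∫ p, (ust ⟪wt, p.1⟫ - ustar ⟪wstar, p.1⟫) ^ 2 ∂D ≤
        ∫ p, (u ⟪wt, p.1⟫ - ustar ⟪wstar, p.1⟫) ^ 2 ∂D) :
    ∫ p, (ut ⟪wt, p.1⟫ - ust ⟪wt, p.1⟫) ^ 2 ∂D ≤
      ∫ p, (p.2 - ustar ⟪wstar, p.1⟫) ^ 2 ∂D :=
  population_optimal_activations_close_general a b D hy ustar wstar wt hystar ut hut hutL2 hutmin
    ust hust hustL2 hustmin
end

section
/- Let z₁ ≤ z₂ ≤ ⋯ ≤ z_m be reals with z_k = 0 for some index k, and let y*₁ ≤ ⋯ ≤ y*_m be reals with y*_k-related structure given by y*_i = u*(z*_i) for a non-decreasing function. Let (ŷ₁,…,ŷ_m) minimize Σᵢ(ỹᵢ - y*ᵢ)² subject to: ỹ_{i+1} - ỹᵢ ≥ 0 for 1 ≤ i ≤ k-1; ỹ_{i+1} - ỹᵢ ≥ a(z_{i+1} - zᵢ) for k ≤ i ≤ m-1; ỹ_{i+1} - ỹᵢ ≤ b(z_{i+1} - zᵢ) for all 1 ≤ i ≤ m-1; and ỹ_k = 0. Then for any function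 f : ℝ → ℝ with f(0) = 0, f(α₁) - f(α₂) ≤ (α₁ - α₂)/a for all α₁ ≥ α₂ ≥ 0, and f(α₁) - f(α₂) ≥ (α₁ - α₂)/b for all α₁ ≥ α₂, it holds that Σᵢ (ŷᵢ - y*ᵢ)(zᵢ - f(ŷᵢ)) ≥ 0. -/
/-! The vector `ŷ + ε (z - f ∘ ŷ)` stays feasible for all small `ε > 0`: constraints with slack
survive a small perturbation, and on every active constraint the direction `d = z - f ∘ ŷ` points
inward: an active monotonicity constraint `ŷᵢ₊₁ = ŷᵢ` gives `Δd = Δz ≥ 0`, an active lower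
constraint `Δŷ = a Δz` (where `ŷ ≥ 0`) gives `Δ(f ∘ ŷ) ≤ Δŷ / a = Δz`, and an active upper
constraint `Δŷ = b Δz` gives `Δ(f ∘ ŷ) ≥ Δŷ / b = Δz`. Minimality of `ŷ` along this ray forces
the derivative `2 ⟨ŷ - y*, d⟩` of the objective at `ε = 0⁺` to be nonnegative. -/

/-- Feasibility for the shape-constrained isotonic least-squares program:
`t k = 0`; `t` is non-decreasing on indices `1,…,k`; increments grow at rate at
least `a` above index `k`; and all increments are at most `b` times those of
`z` (indices run from `1` to `m`). -/
def Feasible (m k : ℕ) (a b : ℝ) (z t : ℕ → ℝ) : Prop :=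
  t k = 0 ∧
  (∀ i, 1 ≤ i → i < k → 0 ≤ t (i + 1) - t i) ∧
  (∀ i, k ≤ i → i < m → a * (z (i + 1) - z i) ≤ t (i + 1) - t i) ∧
  (∀ i, 1 ≤ i → i < m → t (i + 1) - t i ≤ b * (z (i + 1) - z i))

open Filter Topology

lemma eventually_nonneg_add_mul {s c : ℝ} (hs : 0 ≤ s) (hc : s = 0 → 0 ≤ c) :
    ∀ᶠ ε in 𝓝[>] (0 : ℝ), 0 ≤ s + ε * c := by
  rcases hs.lt_or_eq with hpos | rfl
  · have : Tendsto (fun ε : ℝ => s + ε * c) (𝓝 0) (𝓝 s) :=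
      (continuous_const.add (continuous_id.mul continuous_const)).tendsto' _ _ (by simp)
    exact nhdsWithin_le_nhds ((this.eventually (lt_mem_nhds hpos)).mono fun _ => le_of_lt)
  · filter_upwards [self_mem_nhdsWithin] with ε (hε : 0 < ε)
    nlinarith [hc rfl]

lemma sum_mul_nonneg_of_eventually_sum_sq_le {ι : Type*} {s : Finset ι} {r d : ι → ℝ}
    (h : ∀ᶠ ε in 𝓝[>] (0 : ℝ), ∑ i ∈ s, r i ^ 2 ≤ ∑ i ∈ s, (r i + ε * d i) ^ 2) :
    0 ≤ ∑ i ∈ s, r i * d i := by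
  have hexpand : ∀ ε : ℝ, ∑ i ∈ s, (r i + ε * d i) ^ 2
      = ∑ i ∈ s, r i ^ 2 + ε * (2 * ∑ i ∈ s, r i * d i + ε * ∑ i ∈ s, d i ^ 2) := by
    intro ε
    simp only [Finset.mul_sum, ← Finset.sum_add_distrib]
    exact Finset.sum_congr rfl fun i _ => by ring
  have hlim : Tendsto (fun ε : ℝ => 2 * ∑ i ∈ s, r i * d i + ε * ∑ i ∈ s, d i ^ 2)
      (𝓝[>] 0) (𝓝 (2 * ∑ i ∈ s, r i * d i)) := tendsto_nhdsWithin_of_tendsto_nhds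
    ((continuous_const.add (continuous_id.mul continuous_const)).tendsto' _ _ (by simp))
  have := ge_of_tendsto hlim <| (h.and self_mem_nhdsWithin).mono fun ε ⟨hε, (hpos : 0 < ε)⟩ => by
    rw [hexpand] at hε
    exact nonneg_of_mul_nonneg_right (by linarith) hpos
  linarith

lemma eventually_forall_of_le_of_lt {α : Type*} {l : Filter α} {p : ℕ → α → Prop} {lo hi : ℕ}
    (h : ∀ i, lo ≤ i → i < hi → ∀ᶠ x in l, p i x) :
    ∀ᶠ x in l, ∀ i, lo ≤ i → i < hi → p i x := by
  filter_upwards [(Finset.Ico lo hi).eventually_all.2 fun i hi => h i (Finset.mem_Ico.1 hi).1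
    (Finset.mem_Ico.1 hi).2] with x hx i h1 h2 using hx i (Finset.mem_Ico.2 ⟨h1, h2⟩)

namespace Feasible

variable {m k : ℕ} {a b : ℝ} {z t : ℕ → ℝ}

lemma nonneg_of_le (ht : Feasible m k a b z t) (hk1 : 1 ≤ k) (ha : 0 ≤ a)
    (hz : ∀ i, 1 ≤ i → i < m → z i ≤ z (i + 1)) {i : ℕ} (hki : k ≤ i) (him : i ≤ m) :
    0 ≤ t i := by
  induction i, hki using Nat.le_induction with
  | base => exact ht.1.ge
  | succ n hkn ih =>
    have hnm : n < m := him
    nlinarith [ht.2.2.1 n hkn hnm, hz n (hk1.trans hkn) hnm, ih hnm.le]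

theorem eventually_feasible_add_mul (ht : Feasible m k a b z t) (hk1 : 1 ≤ k) (hkm : k ≤ m)
    (ha : 0 < a) (hb : 0 < b) (hz : ∀ i, 1 ≤ i → i < m → z i ≤ z (i + 1)) (hzk : z k = 0)
    {f : ℝ → ℝ} (hf0 : f 0 = 0)
    (hfa : ∀ α₁ α₂ : ℝ, 0 ≤ α₂ → α₂ ≤ α₁ → f α₁ - f α₂ ≤ (α₁ - α₂) / a)
    (hfb : ∀ α₁ α₂ : ℝ, α₂ ≤ α₁ → (α₁ - α₂) / b ≤ f α₁ - f α₂) :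
    ∀ᶠ ε in 𝓝[>] (0 : ℝ), Feasible m k a b z (fun i => t i + ε * (z i - f (t i))) := by
  obtain ⟨htk, hmono, hlow, hupp⟩ := ht
  set d : ℕ → ℝ := fun i => z i - f (t i) with hd
  have hdir_mono : ∀ i, 1 ≤ i → i < k → t (i + 1) - t i = 0 → 0 ≤ d (i + 1) - d i := by
    intro i h1 hik hact
    simp only [hd, show t (i + 1) = t i by linarith]
    linarith [hz i h1 (hik.trans_le hkm)]
  have hdir_low : ∀ i, k ≤ i → i < m →
      t (i + 1) - t i - a * (z (i + 1) - z i) = 0 → 0 ≤ d (i + 1) - d i := by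
    intro i hki him hact
    have hti := nonneg_of_le ⟨htk, hmono, hlow, hupp⟩ hk1 ha.le hz hki him.le
    have := hfa (t (i + 1)) (t i) hti (by nlinarith [hz i (hk1.trans hki) him])
    rw [sub_eq_zero.1 hact, mul_div_cancel_left₀ _ ha.ne'] at this
    simp only [hd]
    linarith
  have hdir_upp : ∀ i, 1 ≤ i → i < m →
      b * (z (i + 1) - z i) - (t (i + 1) - t i) = 0 → 0 ≤ d i - d (i + 1) := by
    intro i h1 him hact
    have := hfb (t (i + 1)) (t i) (by nlinarith [hz i h1 him])
    rw [← sub_eq_zero.1 hact, mul_div_cancel_left₀ _ hb.ne'] at this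
    simp only [hd]
    linarith
  filter_upwards [
    eventually_forall_of_le_of_lt fun i h1 h2 =>
      eventually_nonneg_add_mul (hmono i h1 h2) (hdir_mono i h1 h2),
    eventually_forall_of_le_of_lt fun i h1 h2 =>
      eventually_nonneg_add_mul (sub_nonneg.2 (hlow i h1 h2)) (hdir_low i h1 h2),
    eventually_forall_of_le_of_lt fun i h1 h2 =>
      eventually_nonneg_add_mul (sub_nonneg.2 (hupp i h1 h2)) (hdir_upp i h1 h2)]
    with ε h_mono h_low h_upp
  refine ⟨by simp [htk, hzk, hf0], fun i h1 h2 => ?_, fun i h1 h2 => ?_, fun i h1 h2 => ?_⟩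
  · linarith [h_mono i h1 h2]
  · linarith [h_low i h1 h2]
  · linarith [h_upp i h1 h2]

end Feasible

theorem kkt_positivity_general
    (m k : ℕ) (hk1 : 1 ≤ k) (hkm : k ≤ m)
    (a b : ℝ) (ha : 0 < a) (hab : a ≤ b)
    (z ystar yhat : ℕ → ℝ)
    (hzmono : ∀ i j, 1 ≤ i → i ≤ j → j ≤ m → z i ≤ z j)
    (hzk : z k = 0)
    (hfeas : Feasible m k a b z yhat)
    (hmin : ∀ t : ℕ → ℝ, Feasible m k a b z t →
      ∑ i ∈ Finset.Icc 1 m, (yhat i - ystar i) ^ 2 ≤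
        ∑ i ∈ Finset.Icc 1 m, (t i - ystar i) ^ 2)
    (f : ℝ → ℝ) (hf0 : f 0 = 0)
    (hfa : ∀ α₁ α₂ : ℝ, 0 ≤ α₂ → α₂ ≤ α₁ → f α₁ - f α₂ ≤ (α₁ - α₂) / a)
    (hfb : ∀ α₁ α₂ : ℝ, α₂ ≤ α₁ → (α₁ - α₂) / b ≤ f α₁ - f α₂) :
    0 ≤ ∑ i ∈ Finset.Icc 1 m, (yhat i - ystar i) * (z i - f (yhat i)) := by
  have hz : ∀ i, 1 ≤ i → i < m → z i ≤ z (i + 1) := fun i h1 h2 =>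
    hzmono i (i + 1) h1 i.le_succ h2
  refine sum_mul_nonneg_of_eventually_sum_sq_le ?_
  filter_upwards [hfeas.eventually_feasible_add_mul hk1 hkm ha (ha.trans_le hab) hz hzk hf0 hfa hfb]
    with ε hε
  simpa only [add_sub_right_comm] using hmin _ hε

/-- **KKT positivity lemma.** The residuals of the shape-constrained
least-squares fit `ŷ` are non-negatively correlated with `zᵢ - f(ŷᵢ)` for any
approximate inverse `f` whose slope lies between `1/b` and `1/a`. -/
theorem kkt_positivity
    (m k : ℕ) (hk1 : 1 ≤ k) (hkm : k ≤ m)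
    (a b : ℝ) (ha : 0 < a) (hab : a ≤ b)
    (z ystar yhat : ℕ → ℝ)
    (hzmono : ∀ i j, 1 ≤ i → i ≤ j → j ≤ m → z i ≤ z j)
    (hzk : z k = 0)
    (hymono : ∀ i j, 1 ≤ i → i ≤ j → j ≤ m → ystar i ≤ ystar j)
    (hfeas : Feasible m k a b z yhat)
    (hmin : ∀ t : ℕ → ℝ, Feasible m k a b z t →
      ∑ i ∈ Finset.Icc 1 m, (yhat i - ystar i) ^ 2 ≤
        ∑ i ∈ Finset.Icc 1 m, (t i - ystar i) ^ 2)
    (f : ℝ → ℝ) (hf0 : f 0 = 0)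
    (hfa : ∀ α₁ α₂ : ℝ, 0 ≤ α₂ → α₂ ≤ α₁ → f α₁ - f α₂ ≤ (α₁ - α₂) / a)
    (hfb : ∀ α₁ α₂ : ℝ, α₂ ≤ α₁ → (α₁ - α₂) / b ≤ f α₁ - f α₂) :
    0 ≤ ∑ i ∈ Finset.Icc 1 m, (yhat i - ystar i) * (z i - f (yhat i)) :=
  kkt_positivity_general m k hk1 hkm a b ha hab z ystar yhat hzmono hzk hfeas hmin f hf0 hfa hfb
end
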